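/- Let 0 < t < y. Then there exists μ̂ ∈ [y − t, y] with E₁(μ̂, t) = y; that is, the maximum conditional-likelihood equation y = μ + (φ(t−μ) − φ(−t−μ))/Z₁(μ,t) has a solution μ lying between the soft-thresholding value y − t and the hard-thresholding value y. -/

import Mathlib

/-!
`E₁(μ, t) = μ + (φ(t - μ) - φ(t + μ)) / Z₁(μ, t)` is continuous in `μ`, so by the intermediate
value theorem it suffices to show `μ ≤ E₁(μ, t) ≤ μ + t` for `μ ≥ 0`, and to apply this at
`μ = y` and `μ = y - t`. The lower bound holds because `|t - μ| ≤ t + μ`. For the upper bound,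
`φ(t - μ) - φ(t + μ) ≤ t (Φ(t + μ) - Φ(t - μ)) ≤ t Z₁(μ, t)`: the difference of the two sides of
the first inequality vanishes at `μ = 0` and has derivative `μ (φ(t - μ) - φ(t + μ)) ≥ 0`.
-/

open MeasureTheory

/-- Standard Gaussian density `φ(x) = (2π)^{-1/2} exp(-x²/2)`. -/
noncomputable def gpdf (x : ℝ) : ℝ := (Real.sqrt (2 * Real.pi))⁻¹ * Real.exp (-x ^ 2 / 2)

/-- Standard Gaussian CDF `Φ(x)`. -/
noncomputable def gcdf (x : ℝ) : ℝ := ∫ t in Set.Iic x, gpdf t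

/-- Normalizing constant `Z₁(μ,t) = 1 - Φ(t-μ) + Φ(-t-μ)`. -/
noncomputable def Z1 (μ t : ℝ) : ℝ := 1 - gcdf (t - μ) + gcdf (-t - μ)

/-- Mean of `N(μ,1)` conditioned on the two-sided tail `(-∞,-t] ∪ [t,∞)`. -/
noncomputable def E1 (μ t : ℝ) : ℝ :=
  (Z1 μ t)⁻¹ * ∫ x in {x : ℝ | t ≤ |x|}, x * gpdf (x - μ)

open Set Real ProbabilityTheory

lemma gaussianPDFReal_zero_one_eq_gpdf : gaussianPDFReal 0 1 = gpdf := by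
  ext x; simp [gaussianPDFReal, gpdf]

lemma gaussianPDFReal_one_eq_gpdf_sub (μ x : ℝ) : gaussianPDFReal μ 1 x = gpdf (x - μ) := by
  simp [gaussianPDFReal, gpdf]

lemma gpdf_pos (x : ℝ) : 0 < gpdf x :=
  gaussianPDFReal_zero_one_eq_gpdf ▸ gaussianPDFReal_pos 0 1 x one_ne_zero

lemma gpdf_neg (x : ℝ) : gpdf (-x) = gpdf x := by
  simp [gpdf]

lemma gpdf_le_gpdf_of_sq_le {a b : ℝ} (h : a ^ 2 ≤ b ^ 2) : gpdf b ≤ gpdf a := by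
  unfold gpdf; gcongr

lemma gpdf_add_le_gpdf_sub {t μ : ℝ} (h : 0 ≤ t * μ) : gpdf (t + μ) ≤ gpdf (t - μ) :=
  gpdf_le_gpdf_of_sq_le (by nlinarith)

@[fun_prop]
lemma continuous_gpdf : Continuous gpdf := by
  unfold gpdf; fun_prop

lemma hasDerivAt_gpdf (x : ℝ) : HasDerivAt gpdf (-x * gpdf x) x := by
  have h := ((hasDerivAt_pow 2 x).fun_neg.div_const 2).exp.const_mul (√(2 * π))⁻¹
  refine h.congr_deriv ?_
  simp only [gpdf]; ring

lemma integrable_gpdf : Integrable gpdf :=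
  gaussianPDFReal_zero_one_eq_gpdf ▸ integrable_gaussianPDFReal 0 1

lemma integral_gpdf : ∫ x, gpdf x = 1 :=
  gaussianPDFReal_zero_one_eq_gpdf ▸ integral_gaussianPDFReal_eq_one 0 one_ne_zero

lemma integrable_mul_gpdf_sub (μ : ℝ) : Integrable (fun x => x * gpdf (x - μ)) := by
  have h := (memLp_id_gaussianReal (μ := μ) (v := 1) 1).integrable le_rfl
  rw [gaussianReal_of_var_ne_zero _ one_ne_zero, integrable_withDensity_iff_integrable_smul'
    (measurable_gaussianPDF μ 1) (ae_of_all _ fun _ ↦ gaussianPDF_lt_top)] at h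
  simpa [toReal_gaussianPDF, gaussianPDFReal_one_eq_gpdf_sub, mul_comm] using h

lemma integral_mul_gpdf_sub (μ : ℝ) : ∫ x, x * gpdf (x - μ) = μ := by
  have h := integral_id_gaussianReal (μ := μ) (v := 1)
  rw [integral_gaussianReal_eq_integral_smul one_ne_zero] at h
  simpa [gaussianPDFReal_one_eq_gpdf_sub, mul_comm] using h

lemma gcdf_nonneg (x : ℝ) : 0 ≤ gcdf x :=
  setIntegral_nonneg measurableSet_Iic fun y _ => (gpdf_pos y).le

lemma gcdf_lt_one (x : ℝ) : gcdf x < 1 := by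
  have htail : 0 < ∫ y in Ioi x, gpdf y := by
    rw [setIntegral_pos_iff_support_of_nonneg_ae (ae_of_all _ fun y => (gpdf_pos y).le)
      integrable_gpdf.integrableOn, Function.support_eq_univ fun y => (gpdf_pos y).ne',
      univ_inter, Real.volume_Ioi]
    exact ENNReal.zero_lt_top
  have hsplit := integral_add_compl (measurableSet_Iic (a := x)) integrable_gpdf
  rw [compl_Iic, integral_gpdf] at hsplit
  exact (lt_add_of_pos_right _ htail).trans_eq hsplit

lemma hasDerivAt_gcdf (x : ℝ) : HasDerivAt gcdf (gpdf x) x := by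
  have hprim : gcdf = fun b => gcdf 0 + ∫ y in (0 : ℝ)..b, gpdf y := by
    ext b
    rw [← intervalIntegral.integral_Iic_sub_Iic integrable_gpdf.integrableOn
      integrable_gpdf.integrableOn, gcdf, gcdf, add_sub_cancel]
  rw [hprim]
  exact ((continuous_gpdf.integral_hasStrictDerivAt 0 x).hasDerivAt).const_add _

@[fun_prop]
lemma continuous_gcdf : Continuous gcdf :=
  continuous_iff_continuousAt.2 fun x => (hasDerivAt_gcdf x).continuousAt

lemma Z1_pos (μ t : ℝ) : 0 < Z1 μ t := by
  have := gcdf_lt_one (t - μ)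
  have := gcdf_nonneg (-t - μ)
  unfold Z1; linarith

lemma intervalIntegral_mul_gpdf_sub (μ a b : ℝ) :
    ∫ x in a..b, x * gpdf (x - μ)
      = (μ * gcdf (b - μ) - gpdf (b - μ)) - (μ * gcdf (a - μ) - gpdf (a - μ)) := by
  refine intervalIntegral.integral_eq_sub_of_hasDerivAt
    (f := fun x => μ * gcdf (x - μ) - gpdf (x - μ)) (fun x _ => ?_)
    ((by fun_prop : Continuous fun x => x * gpdf (x - μ)).intervalIntegrable a b)
  refine (((hasDerivAt_gcdf _).comp_sub_const x μ).const_mul μ |>.fun_sub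
    ((hasDerivAt_gpdf _).comp_sub_const x μ)).congr_deriv ?_
  ring

lemma E1_eq (μ : ℝ) {t : ℝ} (ht : 0 ≤ t) :
    E1 μ t = μ + (gpdf (t - μ) - gpdf (t + μ)) / Z1 μ t := by
  have hcompl : {x : ℝ | t ≤ |x|}ᶜ = Ioo (-t) t := by
    ext x; simp [abs_lt]
  have hsplit := integral_add_compl (measurableSet_le measurable_const measurable_abs)
    (integrable_mul_gpdf_sub μ) (s := {x : ℝ | t ≤ |x|})
  have hsymm : gpdf (-t - μ) = gpdf (t + μ) := by
    rw [← gpdf_neg, neg_sub, sub_neg_eq_add, add_comm]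
  rw [hcompl, ← integral_Ioc_eq_integral_Ioo, ← intervalIntegral.integral_of_le (by linarith),
    intervalIntegral_mul_gpdf_sub, integral_mul_gpdf_sub, hsymm] at hsplit
  have htail : ∫ x in {x : ℝ | t ≤ |x|}, x * gpdf (x - μ)
      = μ * Z1 μ t + (gpdf (t - μ) - gpdf (t + μ)) := by
    unfold Z1; linarith
  have hZ := (Z1_pos μ t).ne'
  rw [E1, htail]
  field_simp

lemma gpdf_sub_sub_gpdf_add_le {t μ : ℝ} (ht : 0 ≤ t) (hμ : 0 ≤ μ) :
    gpdf (t - μ) - gpdf (t + μ) ≤ t * (gcdf (t + μ) - gcdf (t - μ)) := by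
  set g : ℝ → ℝ := fun m => t * (gcdf (t + m) - gcdf (t - m)) - (gpdf (t - m) - gpdf (t + m))
  have hg : ∀ m, HasDerivAt g (m * (gpdf (t - m) - gpdf (t + m))) m := fun m => by
    have hcdf := ((hasDerivAt_gcdf _).comp_const_add t m).fun_sub
      ((hasDerivAt_gcdf _).comp_const_sub t m)
    have hpdf := ((hasDerivAt_gpdf _).comp_const_sub t m).fun_sub
      ((hasDerivAt_gpdf _).comp_const_add t m)
    exact ((hcdf.const_mul t).fun_sub hpdf).congr_deriv (by ring)
  have hmono : MonotoneOn g (Ici 0) := by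
    refine monotoneOn_of_hasDerivWithinAt_nonneg (convex_Ici 0)
      (HasDerivAt.continuousOn fun m _ => hg m) (fun m _ => (hg m).hasDerivWithinAt) ?_
    rw [interior_Ici]
    exact fun m hm => mul_nonneg hm.le
      (sub_nonneg.2 (gpdf_add_le_gpdf_sub (mul_nonneg ht hm.le)))
  have hg0 := hmono self_mem_Ici hμ hμ
  simp only [g, add_zero, sub_zero, sub_self, mul_zero] at hg0
  linarith

lemma le_E1 {μ t : ℝ} (hμ : 0 ≤ μ) (ht : 0 ≤ t) : μ ≤ E1 μ t := by
  rw [E1_eq μ ht]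
  exact le_add_of_nonneg_right (div_nonneg
    (sub_nonneg.2 (gpdf_add_le_gpdf_sub (mul_nonneg ht hμ))) (Z1_pos μ t).le)

lemma E1_le_add {μ t : ℝ} (hμ : 0 ≤ μ) (ht : 0 ≤ t) : E1 μ t ≤ μ + t := by
  have hmass : gcdf (t + μ) - gcdf (t - μ) ≤ Z1 μ t := by
    have := gcdf_lt_one (t + μ)
    have := gcdf_nonneg (-t - μ)
    unfold Z1; linarith
  rw [E1_eq μ ht, add_le_add_iff_left, div_le_iff₀ (Z1_pos μ t)]
  exact (gpdf_sub_sub_gpdf_add_le ht hμ).trans (mul_le_mul_of_nonneg_left hmass ht)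

lemma continuous_E1 {t : ℝ} (ht : 0 ≤ t) : Continuous fun μ => E1 μ t := by
  simp_rw [E1_eq _ ht]
  exact continuous_id.add <| Continuous.div (by fun_prop) (by unfold Z1; fun_prop)
    fun μ => (Z1_pos μ t).ne'

/-- For `0 < t < y`, the maximum conditional-likelihood equation `E₁(μ,t) = y` has a
solution `μ̂` lying between the soft-thresholding value `y - t` and the
hard-thresholding value `y`. -/
theorem truncGauss_estimator_exists (t y : ℝ) (ht : 0 < t) (hty : t < y) :
    ∃ μhat ∈ Set.Icc (y - t) y, E1 μhat t = y := by
  have hy : 0 ≤ y - t := by linarith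
  exact intermediate_value_Icc (by linarith) (continuous_E1 ht.le).continuousOn
    ⟨by simpa using E1_le_add hy ht.le, le_E1 (by linarith) ht.le⟩
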